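/- For Dirichlet distributions with natural parameters θ and μ (componentwise θ_k = α_k − 1 > 0, μ_k = β_k − 1 > 0) and conjugate Hölder exponents α, β, the Hölder pseudo-divergence equals (1/α)F(αθ) + (1/β)F(βμ) − F(θ+μ), where F(η) = Σ_k log Γ(η_k + 1) − log Γ(Σ_k (η_k + 1)). -/
import Mathlib


open MeasureTheory

/-- Closed-form Hölder pseudo-divergence between two Dirichlet distributions, written in
natural coordinates `θ, η` (with density `∝ ∏ x k ^ θ k` on the simplex) whose
log-normalizer is `F η = ∑ k, log Γ (η k + 1) − log Γ (∑ k η k + K)`. -/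
theorem dirichlet_holder_pseudo_divergence_closed_form
    {ΩK : Type*} [MeasurableSpace ΩK] (K : ℕ) (hK : 2 ≤ K)
    (ν : Measure ΩK) (x : ΩK → Fin K → ℝ) (hx : ∀ ω k, 0 < x ω k)
    (F : (Fin K → ℝ) → ℝ)
    (hF : ∀ η : Fin K → ℝ, F η =
      (∑ k, Real.log (Real.Gamma (η k + 1))) - Real.log (Real.Gamma ((∑ k, η k) + K)))
    (hnorm : ∀ η : Fin K → ℝ, (∀ k, 0 < η k) →
      ∫ ω, ∏ k, x ω k ^ η k ∂ν = Real.exp (F η))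
    (a b : ℝ) (ha : 1 < a) (hb : b = a / (a - 1))
    (θ η : Fin K → ℝ) (hθ : ∀ k, 0 < θ k) (hη : ∀ k, 0 < η k)
    (p q : ΩK → ℝ)
    (hp : ∀ ω, p ω = (∏ k, x ω k ^ θ k) / Real.exp (F θ))
    (hq : ∀ ω, q ω = (∏ k, x ω k ^ η k) / Real.exp (F η)) :
    - Real.log ((∫ ω, p ω * q ω ∂ν) /
        ((∫ ω, p ω ^ a ∂ν) ^ (1 / a) * (∫ ω, q ω ^ b ∂ν) ^ (1 / b))) =
      (1 / a) * F (a • θ) + (1 / b) * F (b • η) - F (θ + η) := by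
  have ha0 : (0:ℝ) < a := lt_trans one_pos ha
  have hb0 : (0:ℝ) < b := by rw [hb]; exact div_pos ha0 (sub_pos.2 ha)
  -- ∫ p q
  have hpq : (∫ ω, p ω * q ω ∂ν) = Real.exp (F (θ + η) - (F θ + F η)) := by
    have h1 : ∀ ω, p ω * q ω =
        (∏ k, x ω k ^ (θ + η) k) / (Real.exp (F θ) * Real.exp (F η)) := by
      intro ω
      rw [hp, hq, div_mul_div_comm, ← Finset.prod_mul_distrib]
      congr 1
      refine Finset.prod_congr rfl fun k _ => ?_
      rw [Pi.add_apply, Real.rpow_add (hx ω k)]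
    simp only [h1]
    rw [integral_div, hnorm (θ + η) (fun k => add_pos (hθ k) (hη k)),
      ← Real.exp_add, ← Real.exp_sub]
  -- ∫ r^c for a normalized density r
  have key : ∀ (c : ℝ) (τ : Fin K → ℝ) (r : ΩK → ℝ), 0 < c → (∀ k, 0 < τ k) →
      (∀ ω, r ω = (∏ k, x ω k ^ τ k) / Real.exp (F τ)) →
      (∫ ω, r ω ^ c ∂ν) = Real.exp (F (c • τ) - F τ * c) := by
    intro c τ r hc hτ hr
    have h1 : ∀ ω, r ω ^ c = (∏ k, x ω k ^ (c • τ) k) / Real.exp (F τ * c) := by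
      intro ω
      rw [hr, Real.div_rpow (Finset.prod_nonneg fun k _ => (Real.rpow_pos_of_pos (hx ω k) _).le)
        (Real.exp_pos _).le, ← Real.exp_mul,
        ← Real.finset_prod_rpow _ _ (fun k _ => (Real.rpow_pos_of_pos (hx ω k) _).le)]
      congr 1
      refine Finset.prod_congr rfl fun k _ => ?_
      rw [← Real.rpow_mul (hx ω k).le, Pi.smul_apply, smul_eq_mul, mul_comm]
    simp only [h1]
    rw [integral_div,
      hnorm (c • τ) (fun k => by simpa using mul_pos hc (hτ k)), ← Real.exp_sub]
  have hpa := key a θ p ha0 hθ hp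
  have hqb := key b η q hb0 hη hq
  rw [hpq, hpa, hqb, ← Real.exp_mul, ← Real.exp_mul, ← Real.exp_add, ← Real.exp_sub,
    Real.log_exp]
  field_simp
  ring
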